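/- arXiv:2003.05882 — 2 statements merged into one kernel-verified Lean document; each statement's English description precedes it below -/
import Mathlib

section
/- Consider a two-link parallel network with capacities 0 < c_1 ≤ c_2, routing demand r with c_2 − c_1 ≤ r ≤ 2 c_1, and an uncertainty interval π^a = [π̲^a, π̄^a] with 0 ≤ π̲^a ≤ π̄^a ≤ c_1 + c_2. Then the value of information satisfies: V(π^a) = 0 if [π̲^a, π̄^a] ∩ [c_1, c_2] = ∅, and V(π^a) = (1/4)( min{π̄^a, c_2} − max{π̲^a, c_1} ) otherwise. -/
open Finset

noncomputable section

/-- Set of feasible profiles routing `r` units of traffic with per-edge capacities `c`. -/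
def Feas {E : Type*} [Fintype E] (c : E → ℝ) (r : ℝ) : Set (E → ℝ) :=
  {f | ∑ e, f e = r ∧ ∀ e, 0 ≤ f e ∧ f e ≤ c e}

/-- Total blocked traffic. -/
def Blocked {E : Type*} [Fintype E] (c f fa : E → ℝ) : ℝ :=
  ∑ e, max (f e + fa e - c e) 0

/-- Best-response value of the attacker against routing `f` with budget `ra`. -/
def Bstar {E : Type*} [Fintype E] (c : E → ℝ) (f : E → ℝ) (ra : ℝ) : ℝ :=
  sSup ((fun fa => Blocked c f fa) '' Feas c ra)

/-- Stackelberg value. -/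
def BSE {E : Type*} [Fintype E] (c : E → ℝ) (r ra : ℝ) : ℝ :=
  sInf ((fun f => Bstar c f ra) '' Feas c r)

/-- max over nonempty E' ⊆ E of (C(E') - r)/|E'|. -/
def gval {E : Type*} [Fintype E] [Nonempty E] (c : E → ℝ) (r : ℝ) : ℝ :=
  (univ.powerset.filter fun s : Finset E => s.Nonempty).sup'
    ⟨univ, by simp [Finset.univ_nonempty]⟩
    (fun s => ((∑ e ∈ s, c e) - r) / s.card)

/-- max over nonempty E' ⊆ E of (r - C(E \ E'))/|E'|. -/
def hval {E : Type*} [Fintype E] [Nonempty E] [DecidableEq E] (c : E → ℝ) (r : ℝ) : ℝ :=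
  (univ.powerset.filter fun s : Finset E => s.Nonempty).sup'
    ⟨univ, by simp [Finset.univ_nonempty]⟩
    (fun s => (r - ∑ e ∈ univ \ s, c e) / s.card)

/-- `fa` is a best-response attack to `f`. -/
def IsBestResponse {E : Type*} [Fintype E] (c : E → ℝ) (ra : ℝ) (f fa : E → ℝ) : Prop :=
  fa ∈ Feas c ra ∧ ∀ fa' ∈ Feas c ra, Blocked c f fa' ≤ Blocked c f fa

/-- Nash equilibrium. -/
def IsNash {E : Type*} [Fintype E] (c : E → ℝ) (r ra : ℝ) (f fa : E → ℝ) : Prop :=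
  f ∈ Feas c r ∧ fa ∈ Feas c ra ∧
    (∀ f' ∈ Feas c r, Blocked c f fa ≤ Blocked c f' fa) ∧
    (∀ fa' ∈ Feas c ra, Blocked c f fa' ≤ Blocked c f fa)

/-- Stackelberg equilibrium. -/
def IsStackelberg {E : Type*} [Fintype E] (c : E → ℝ) (r ra : ℝ) (f fa : E → ℝ) : Prop :=
  f ∈ Feas c r ∧ fa ∈ Feas c ra ∧
    (∀ f' ∈ Feas c r, Bstar c f ra ≤ Bstar c f' ra) ∧
    (∀ fa' ∈ Feas c ra, Blocked c f fa' ≤ Blocked c f fa)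

/-!
For a budget `ra ∈ [c₁, c₂]` the Stackelberg routing puts `s(ra) = (r + ra - c₂) / 2` on the
smaller link, and the regret `B*(f, ra) - B^SE(r, ra)` of a routing `f` is exactly `|f₁ - s(ra)|`.
Outside `[c₁, c₂]` the Stackelberg routing is frozen at the nearer endpoint, and since the
attacker's best payoff grows by at most the amount of flow moved between the links, the regret is
still at most `|f₁ - s(ra)|`. So the risk over `[lo, hi]` is governed by the range of `s` on it:
routing the midpoint of that range costs half its length, and when `[lo, hi]` meets `[c₁, c₂]`
every routing is at least that far from one of its ends.
-/

section General

variable {E : Type*} [Fintype E] {c f f' fa : E → ℝ} {r r' ra : ℝ}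

lemma blocked_nonneg : 0 ≤ Blocked c f fa :=
  Finset.sum_nonneg fun _ _ => le_max_right _ _

lemma blocked_le_of_mem_feas (hf : f ∈ Feas c r) (hfa : fa ∈ Feas c ra) : Blocked c f fa ≤ r := by
  rw [← hf.1]
  exact Finset.sum_le_sum fun e _ => max_le (by linarith [(hfa.2 e).2]) (hf.2 e).1

lemma bstar_nonneg : 0 ≤ Bstar c f ra :=
  Real.sSup_nonneg (by rintro _ ⟨fa, -, rfl⟩; exact blocked_nonneg)

lemma bstar_le_of_mem_feas (hf : f ∈ Feas c r) : Bstar c f ra ≤ r :=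
  Real.sSup_le (by rintro _ ⟨fa, hfa, rfl⟩; exact blocked_le_of_mem_feas hf hfa)
    (hf.1 ▸ Finset.sum_nonneg fun e _ => (hf.2 e).1)

lemma blocked_le_bstar (hf : f ∈ Feas c r) (hfa : fa ∈ Feas c ra) :
    Blocked c f fa ≤ Bstar c f ra :=
  le_csSup ⟨r, by rintro _ ⟨fa, hfa, rfl⟩; exact blocked_le_of_mem_feas hf hfa⟩ ⟨fa, hfa, rfl⟩

lemma bstar_sub_bstar_le (hf' : f' ∈ Feas c r') :
    Bstar c f ra - Bstar c f' ra ≤ ∑ e, max (f e - f' e) 0 := by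
  rw [sub_le_iff_le_add']
  refine Real.sSup_le ?_ (add_nonneg bstar_nonneg (Finset.sum_nonneg fun _ _ => le_max_right _ _))
  rintro _ ⟨fa, hfa, rfl⟩
  calc Blocked c f fa
      ≤ Blocked c f' fa + ∑ e, max (f e - f' e) 0 := by
        rw [← sub_le_iff_le_add', Blocked, Blocked, ← Finset.sum_sub_distrib]
        exact Finset.sum_le_sum fun e _ =>
          (max_sub_max_le_max _ _ _ _).trans_eq (by congr 1 <;> ring)
    _ ≤ Bstar c f' ra + ∑ e, max (f e - f' e) 0 := by
        gcongr
        exact blocked_le_bstar hf' hfa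

lemma bse_nonneg : 0 ≤ BSE c r ra :=
  Real.sInf_nonneg (by rintro _ ⟨f, -, rfl⟩; exact bstar_nonneg)

lemma bse_le_bstar (hf : f ∈ Feas c r) : BSE c r ra ≤ Bstar c f ra :=
  csInf_le ⟨0, by rintro _ ⟨f, -, rfl⟩; exact bstar_nonneg⟩ ⟨f, hf, rfl⟩

def regret (c : E → ℝ) (r : ℝ) (f : E → ℝ) (ra : ℝ) : ℝ :=
  Bstar c f ra - BSE c r ra

/-- The paper's risk `R(f, π^a)` for the uncertainty interval `π^a = [lo, hi]`. -/
def risk (c : E → ℝ) (r : ℝ) (f : E → ℝ) (lo hi : ℝ) : ℝ :=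
  sSup (regret c r f '' Set.Icc lo hi)

/-- The paper's value of information `V(π^a)` for `π^a = [lo, hi]`. -/
def valueOfInformation (c : E → ℝ) (r lo hi : ℝ) : ℝ :=
  sInf ((fun f => risk c r f lo hi) '' Feas c r)

lemma regret_nonneg (hf : f ∈ Feas c r) : 0 ≤ regret c r f ra :=
  sub_nonneg.2 (bse_le_bstar hf)

lemma regret_le_of_mem_feas (hf : f ∈ Feas c r) : regret c r f ra ≤ r :=
  (sub_le_self _ bse_nonneg).trans (bstar_le_of_mem_feas hf)

variable {lo hi v : ℝ}

lemma regret_le_risk (hf : f ∈ Feas c r) (hra : ra ∈ Set.Icc lo hi) :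
    regret c r f ra ≤ risk c r f lo hi :=
  le_csSup ⟨r, by rintro _ ⟨ra, -, rfl⟩; exact regret_le_of_mem_feas hf⟩ ⟨ra, hra, rfl⟩

lemma risk_le (hlh : lo ≤ hi) (h : ∀ ra ∈ Set.Icc lo hi, regret c r f ra ≤ v) :
    risk c r f lo hi ≤ v :=
  csSup_le ((Set.nonempty_Icc.2 hlh).image _) (by rintro _ ⟨ra, hra, rfl⟩; exact h ra hra)

lemma risk_nonneg (hf : f ∈ Feas c r) (hlh : lo ≤ hi) : 0 ≤ risk c r f lo hi :=
  (regret_nonneg hf).trans (regret_le_risk (ra := lo) hf ⟨le_rfl, hlh⟩)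

lemma valueOfInformation_eq (hlh : lo ≤ hi) (hf : f ∈ Feas c r) (hfv : risk c r f lo hi ≤ v)
    (hv : ∀ f' ∈ Feas c r, v ≤ risk c r f' lo hi) : valueOfInformation c r lo hi = v := by
  have hbdd : BddBelow ((fun f => risk c r f lo hi) '' Feas c r) := by
    refine ⟨0, ?_⟩
    rintro _ ⟨f', hf', rfl⟩
    exact risk_nonneg hf' hlh
  refine le_antisymm ((csInf_le hbdd ⟨f, hf, rfl⟩).trans hfv) (le_csInf ⟨_, f, hf, rfl⟩ ?_)
  rintro _ ⟨f', hf', rfl⟩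
  exact hv f' hf'

end General

section TwoLink

variable {c₁ c₂ r ra : ℝ} {f : Fin 2 → ℝ}

lemma mem_feas_two :
    f ∈ Feas ![c₁, c₂] r ↔ f 0 + f 1 = r ∧ (0 ≤ f 0 ∧ f 0 ≤ c₁) ∧ (0 ≤ f 1 ∧ f 1 ≤ c₂) := by
  simp [Feas, Fin.sum_univ_two, Fin.forall_fin_two]

lemma blocked_two (f fa : Fin 2 → ℝ) :
    Blocked ![c₁, c₂] f fa = max (f 0 + fa 0 - c₁) 0 + max (f 1 + fa 1 - c₂) 0 := by
  simp [Blocked, Fin.sum_univ_two]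

lemma le_bstar_two (hf : f ∈ Feas ![c₁, c₂] r) {a b : ℝ} (hab : a + b = ra)
    (ha : 0 ≤ a) (ha' : a ≤ c₁) (hb : 0 ≤ b) (hb' : b ≤ c₂) :
    max (f 0 + a - c₁) 0 + max (f 1 + b - c₂) 0 ≤ Bstar ![c₁, c₂] f ra := by
  have hfa : ![a, b] ∈ Feas ![c₁, c₂] ra := mem_feas_two.2 (by simpa using ⟨hab, ⟨ha, ha'⟩, hb, hb'⟩)
  simpa [blocked_two] using blocked_le_bstar hf hfa

lemma bstar_two_le {v : ℝ} (hv0 : 0 ≤ v)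
    (hv : ∀ a b, a + b = ra → 0 ≤ a → a ≤ c₁ → 0 ≤ b → b ≤ c₂ →
      max (f 0 + a - c₁) 0 + max (f 1 + b - c₂) 0 ≤ v) :
    Bstar ![c₁, c₂] f ra ≤ v := by
  refine Real.sSup_le ?_ hv0
  rintro _ ⟨fa, hfa, rfl⟩
  obtain ⟨hsum, ⟨h0, h0'⟩, h1, h1'⟩ := mem_feas_two.1 hfa
  exact (blocked_two f fa).trans_le (hv _ _ hsum h0 h0' h1 h1')

lemma bstar_two_of_le_c₁ (hc : c₁ ≤ c₂) (hf : f ∈ Feas ![c₁, c₂] r) (h0 : 0 ≤ ra) (h1 : ra ≤ c₁) :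
    Bstar ![c₁, c₂] f ra = max (f 0 + ra - c₁) (max (f 1 + ra - c₂) 0) := by
  obtain ⟨-, ⟨hf0, hf0'⟩, hf1, hf1'⟩ := mem_feas_two.1 hf
  refine le_antisymm (bstar_two_le (by positivity) fun a b hab ha _ hb _ => ?_)
    (max_le ?_ (max_le ?_ bstar_nonneg))
  · grind
  · exact (le_bstar_two hf (add_zero ra) h0 h1 le_rfl (by linarith)).trans' (by grind)
  · exact (le_bstar_two hf (zero_add ra) le_rfl (by linarith) h0 (by linarith)).trans' (by grind)

lemma bstar_two_of_mem_Icc (hf : f ∈ Feas ![c₁, c₂] r) (h0 : c₁ ≤ ra) (h1 : ra ≤ c₂) :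
    Bstar ![c₁, c₂] f ra = max (f 0) (f 1 + ra - c₂) := by
  obtain ⟨-, ⟨hf0, hf0'⟩, hf1, hf1'⟩ := mem_feas_two.1 hf
  refine le_antisymm (bstar_two_le (by positivity) fun a b hab ha ha' hb _ => ?_) (max_le ?_ ?_)
  · grind
  · exact (le_bstar_two hf (add_sub_cancel c₁ ra) (by linarith) le_rfl (by linarith)
      (by linarith)).trans' (by grind)
  · exact (le_bstar_two hf (zero_add ra) le_rfl (by linarith) (by linarith) h1).trans' (by grind)

lemma bstar_two_of_c₂_le (hc : c₁ ≤ c₂) (hf : f ∈ Feas ![c₁, c₂] r) (h0 : c₂ ≤ ra)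
    (h1 : ra ≤ c₁ + c₂) :
    Bstar ![c₁, c₂] f ra = max (f 0) (max (f 1) (f 0 + f 1 + ra - c₁ - c₂)) := by
  obtain ⟨-, ⟨hf0, hf0'⟩, hf1, hf1'⟩ := mem_feas_two.1 hf
  have hlink₁ := le_bstar_two hf (add_sub_cancel c₁ ra) (by linarith) le_rfl (by linarith)
    (by linarith)
  refine le_antisymm (bstar_two_le (by positivity) fun a b hab ha ha' hb hb' => ?_)
    (max_le (hlink₁.trans' (by grind)) (max_le ?_ (hlink₁.trans' (by grind))))
  · grind
  · exact (le_bstar_two hf (sub_add_cancel ra c₂) (by linarith) (by linarith) (by linarith)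
      le_rfl).trans' (by grind)

/-- Flow on the smaller link of the Stackelberg routing against budget `ra`; it only moves while
`ra ∈ [c₁, c₂]`, hence the clamp. -/
def stackelbergFlow (c₁ c₂ r ra : ℝ) : ℝ :=
  (r + max c₁ (min ra c₂) - c₂) / 2

lemma stackelbergFlow_of_le_c₁ (h : ra ≤ c₁) :
    stackelbergFlow c₁ c₂ r ra = (r + c₁ - c₂) / 2 := by
  rw [stackelbergFlow, max_eq_left (min_le_of_left_le h)]

lemma stackelbergFlow_of_mem_Icc (h₁ : c₁ ≤ ra) (h₂ : ra ≤ c₂) :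
    stackelbergFlow c₁ c₂ r ra = (r + ra - c₂) / 2 := by
  rw [stackelbergFlow, min_eq_left h₂, max_eq_right h₁]

lemma stackelbergFlow_of_c₂_le (hc : c₁ ≤ c₂) (h : c₂ ≤ ra) :
    stackelbergFlow c₁ c₂ r ra = r / 2 := by
  rw [stackelbergFlow, min_eq_right h, max_eq_right hc]
  ring

lemma stackelbergFlow_mono : Monotone (stackelbergFlow c₁ c₂ r) := by
  intro a b h
  unfold stackelbergFlow
  gcongr

lemma stackelbergFlow_mem_Icc (hc : c₁ ≤ c₂) :
    stackelbergFlow c₁ c₂ r ra ∈ Set.Icc ((r + c₁ - c₂) / 2) (r / 2) := by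
  have := max_le hc (min_le_right ra c₂)
  constructor <;> unfold stackelbergFlow <;> linarith [le_max_left c₁ (min ra c₂)]

lemma pair_mem_feas_two (hc : c₁ ≤ c₂) (hr₁ : c₂ - c₁ ≤ r) (hr₂ : r ≤ 2 * c₁) {t : ℝ}
    (ht : t ∈ Set.Icc ((r + c₁ - c₂) / 2) (r / 2)) :
    ![t, r - t] ∈ Feas ![c₁, c₂] r := by
  obtain ⟨ht, ht'⟩ := ht
  exact mem_feas_two.2 (by simp only [Matrix.cons_val_zero, Matrix.cons_val_one]; grind)

lemma bstar_stackelbergFlow_le (hc : c₁ ≤ c₂) (hr₁ : c₂ - c₁ ≤ r) (hr₂ : r ≤ 2 * c₁)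
    (hf : f ∈ Feas ![c₁, c₂] r) (h0 : 0 ≤ ra) (h1 : ra ≤ c₁ + c₂) :
    Bstar ![c₁, c₂] ![stackelbergFlow c₁ c₂ r ra, r - stackelbergFlow c₁ c₂ r ra] ra ≤
      Bstar ![c₁, c₂] f ra := by
  have hs := pair_mem_feas_two hc hr₁ hr₂ (stackelbergFlow_mem_Icc (r := r) (ra := ra) hc)
  have hsum := (mem_feas_two.1 hf).1
  rcases le_total ra c₁ with h₁ | h₁
  · rw [bstar_two_of_le_c₁ hc hs h0 h₁, bstar_two_of_le_c₁ hc hf h0 h₁,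
      stackelbergFlow_of_le_c₁ h₁]
    simp only [Matrix.cons_val_zero, Matrix.cons_val_one]
    grind
  rcases le_total ra c₂ with h₂ | h₂
  · rw [bstar_two_of_mem_Icc hs h₁ h₂, bstar_two_of_mem_Icc hf h₁ h₂,
      stackelbergFlow_of_mem_Icc h₁ h₂]
    simp only [Matrix.cons_val_zero, Matrix.cons_val_one]
    grind
  · rw [bstar_two_of_c₂_le hc hs h₂ h1, bstar_two_of_c₂_le hc hf h₂ h1,
      stackelbergFlow_of_c₂_le hc h₂]
    simp only [Matrix.cons_val_zero, Matrix.cons_val_one]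
    grind

lemma bse_two_eq (hc : c₁ ≤ c₂) (hr₁ : c₂ - c₁ ≤ r) (hr₂ : r ≤ 2 * c₁) (h0 : 0 ≤ ra)
    (h1 : ra ≤ c₁ + c₂) :
    BSE ![c₁, c₂] r ra =
      Bstar ![c₁, c₂] ![stackelbergFlow c₁ c₂ r ra, r - stackelbergFlow c₁ c₂ r ra] ra :=
  IsLeast.csInf_eq ⟨⟨_, pair_mem_feas_two hc hr₁ hr₂ (stackelbergFlow_mem_Icc hc), rfl⟩,
    by rintro _ ⟨f, hf, rfl⟩; exact bstar_stackelbergFlow_le hc hr₁ hr₂ hf h0 h1⟩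

lemma regret_two_le (hc : c₁ ≤ c₂) (hr₁ : c₂ - c₁ ≤ r) (hr₂ : r ≤ 2 * c₁)
    (hf : f ∈ Feas ![c₁, c₂] r) (h0 : 0 ≤ ra) (h1 : ra ≤ c₁ + c₂) :
    regret ![c₁, c₂] r f ra ≤ |f 0 - stackelbergFlow c₁ c₂ r ra| := by
  set s := stackelbergFlow c₁ c₂ r ra
  have hf1 : f 1 - (r - s) = -(f 0 - s) := by linarith [(mem_feas_two.1 hf).1]
  calc regret ![c₁, c₂] r f ra
      = Bstar ![c₁, c₂] f ra - Bstar ![c₁, c₂] ![s, r - s] ra := by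
        rw [regret, bse_two_eq hc hr₁ hr₂ h0 h1]
    _ ≤ ∑ e, max (f e - ![s, r - s] e) 0 :=
        bstar_sub_bstar_le (pair_mem_feas_two hc hr₁ hr₂ (stackelbergFlow_mem_Icc hc))
    _ = |f 0 - s| := by
        simp only [Fin.sum_univ_two, Matrix.cons_val_zero, Matrix.cons_val_one, hf1]
        exact max_zero_add_max_neg_zero_eq_abs_self _

lemma regret_two_eq_of_mem_Icc (hc : c₁ ≤ c₂) (hr₁ : c₂ - c₁ ≤ r) (hr₂ : r ≤ 2 * c₁)
    (hf : f ∈ Feas ![c₁, c₂] r) (h₁ : c₁ ≤ ra) (h₂ : ra ≤ c₂) :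
    regret ![c₁, c₂] r f ra = |f 0 - (r + ra - c₂) / 2| := by
  have hs := pair_mem_feas_two hc hr₁ hr₂ (stackelbergFlow_mem_Icc (r := r) (ra := ra) hc)
  have hsum := (mem_feas_two.1 hf).1
  rw [regret, bse_two_eq hc hr₁ hr₂ (by linarith) (by linarith),
    bstar_two_of_mem_Icc hs h₁ h₂, bstar_two_of_mem_Icc hf h₁ h₂, stackelbergFlow_of_mem_Icc h₁ h₂]
  simp only [Matrix.cons_val_zero, Matrix.cons_val_one]
  grind

variable {lo hi : ℝ}

/-- Routing midway between the Stackelberg flows for the two ends of the interval hedges against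
both. -/
lemma exists_risk_two_le (hc : c₁ ≤ c₂) (hr₁ : c₂ - c₁ ≤ r) (hr₂ : r ≤ 2 * c₁)
    (hlo : 0 ≤ lo) (hlh : lo ≤ hi) (hhi : hi ≤ c₁ + c₂) :
    ∃ f ∈ Feas ![c₁, c₂] r, risk ![c₁, c₂] r f lo hi ≤
      (stackelbergFlow c₁ c₂ r hi - stackelbergFlow c₁ c₂ r lo) / 2 := by
  set s := stackelbergFlow c₁ c₂ r
  have ht : (s lo + s hi) / 2 ∈ Set.Icc ((r + c₁ - c₂) / 2) (r / 2) := by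
    obtain ⟨hl₁, hl₂⟩ := stackelbergFlow_mem_Icc (r := r) (ra := lo) hc
    obtain ⟨hh₁, hh₂⟩ := stackelbergFlow_mem_Icc (r := r) (ra := hi) hc
    constructor <;> linarith
  have hf := pair_mem_feas_two hc hr₁ hr₂ ht
  refine ⟨_, hf, risk_le hlh fun ra hra => ?_⟩
  have hlo' : s lo ≤ s ra := stackelbergFlow_mono hra.1
  have hhi' : s ra ≤ s hi := stackelbergFlow_mono hra.2
  refine (regret_two_le hc hr₁ hr₂ hf (hlo.trans hra.1) (hra.2.trans hhi)).trans
    (abs_le.2 ⟨?_, ?_⟩) <;>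
  · simp only [Matrix.cons_val_zero]
    linarith

lemma le_risk_two (hc : c₁ ≤ c₂) (hr₁ : c₂ - c₁ ≤ r) (hr₂ : r ≤ 2 * c₁)
    (hf : f ∈ Feas ![c₁, c₂] r) {x y : ℝ} (hx : x ∈ Set.Icc lo hi ∩ Set.Icc c₁ c₂)
    (hy : y ∈ Set.Icc lo hi ∩ Set.Icc c₁ c₂) :
    (y - x) / 4 ≤ risk ![c₁, c₂] r f lo hi := by
  have hrx := regret_le_risk hf hx.1
  have hry := regret_le_risk hf hy.1
  rw [regret_two_eq_of_mem_Icc hc hr₁ hr₂ hf hx.2.1 hx.2.2] at hrx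
  rw [regret_two_eq_of_mem_Icc hc hr₁ hr₂ hf hy.2.1 hy.2.2] at hry
  linarith [le_abs_self (f 0 - (r + x - c₂) / 2), neg_abs_le (f 0 - (r + y - c₂) / 2)]

end TwoLink

theorem stmt4_general (c₁ c₂ r lo hi : ℝ)
    (hc : c₁ ≤ c₂)
    (hr₁ : c₂ - c₁ ≤ r) (hr₂ : r ≤ 2 * c₁)
    (hlo : 0 ≤ lo) (hlh : lo ≤ hi) (hhi : hi ≤ c₁ + c₂) :
    (Set.Icc lo hi ∩ Set.Icc c₁ c₂ = ∅ →
      sInf ((fun f => sSup ((fun ra => Bstar ![c₁, c₂] f ra - BSE ![c₁, c₂] r ra) ''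
        Set.Icc lo hi)) '' Feas ![c₁, c₂] r) = 0) ∧
    (Set.Icc lo hi ∩ Set.Icc c₁ c₂ ≠ ∅ →
      sInf ((fun f => sSup ((fun ra => Bstar ![c₁, c₂] f ra - BSE ![c₁, c₂] r ra) ''
        Set.Icc lo hi)) '' Feas ![c₁, c₂] r) = (min hi c₂ - max lo c₁) / 4) := by
  obtain ⟨f₀, hf₀, hrisk⟩ := exists_risk_two_le hc hr₁ hr₂ hlo hlh hhi
  refine ⟨fun hempty => ?_, fun hne => ?_⟩
  · have hs : stackelbergFlow c₁ c₂ r hi = stackelbergFlow c₁ c₂ r lo := by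
      rcases lt_or_ge hi c₁ with h | h
      · rw [stackelbergFlow_of_le_c₁ h.le, stackelbergFlow_of_le_c₁ (hlh.trans h.le)]
      · have h' : c₂ < lo := by
          by_contra! h'
          exact hempty.subset ⟨⟨le_max_left lo c₁, max_le hlh h⟩, le_max_right lo c₁, max_le h' hc⟩
        rw [stackelbergFlow_of_c₂_le hc (h'.le.trans hlh), stackelbergFlow_of_c₂_le hc h'.le]
    exact valueOfInformation_eq hlh hf₀ (hrisk.trans_eq (by rw [hs, sub_self, zero_div]))
      fun f hf => risk_nonneg hf hlh
  · obtain ⟨x, ⟨hxlo, hxhi⟩, hx₁, hx₂⟩ := Set.nonempty_iff_ne_empty.2 hne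
    have hL : max lo c₁ ∈ Set.Icc lo hi ∩ Set.Icc c₁ c₂ :=
      ⟨⟨le_max_left _ _, max_le hlh (hx₁.trans hxhi)⟩, le_max_right _ _, max_le (hxlo.trans hx₂) hc⟩
    have hH : min hi c₂ ∈ Set.Icc lo hi ∩ Set.Icc c₁ c₂ :=
      ⟨⟨le_min hlh (hxlo.trans hx₂), min_le_left _ _⟩, le_min (hx₁.trans hxhi) hc, min_le_right _ _⟩
    have hs : stackelbergFlow c₁ c₂ r hi - stackelbergFlow c₁ c₂ r lo =
        (min hi c₂ - max lo c₁) / 2 := by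
      rw [stackelbergFlow, stackelbergFlow, min_eq_left (hxlo.trans hx₂), max_eq_right hH.2.1,
        max_comm c₁]
      ring
    exact valueOfInformation_eq hlh hf₀ (hrisk.trans_eq (by rw [hs]; ring))
      fun f hf => le_risk_two hc hr₁ hr₂ hf hL hH

/-- Value of information in the two-link network: `V(π^a) = 0` if
`[lo,hi] ∩ [c₁,c₂] = ∅`, and `V(π^a) = (min{hi,c₂} - max{lo,c₁})/4` otherwise. -/
theorem stmt4 (c₁ c₂ r lo hi : ℝ)
    (hc₁ : 0 < c₁) (hc : c₁ ≤ c₂)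
    (hr₁ : c₂ - c₁ ≤ r) (hr₂ : r ≤ 2 * c₁)
    (hlo : 0 ≤ lo) (hlh : lo ≤ hi) (hhi : hi ≤ c₁ + c₂) :
    (Set.Icc lo hi ∩ Set.Icc c₁ c₂ = ∅ →
      sInf ((fun f => sSup ((fun ra => Bstar ![c₁, c₂] f ra - BSE ![c₁, c₂] r ra) ''
        Set.Icc lo hi)) '' Feas ![c₁, c₂] r) = 0) ∧
    (Set.Icc lo hi ∩ Set.Icc c₁ c₂ ≠ ∅ →
      sInf ((fun f => sSup ((fun ra => Bstar ![c₁, c₂] f ra - BSE ![c₁, c₂] r ra) ''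
        Set.Icc lo hi)) '' Feas ![c₁, c₂] r) = (min hi c₂ - max lo c₁) / 4) :=
  stmt4_general c₁ c₂ r lo hi hc hr₁ hr₂ hlo hlh hhi
end
end

section
/- Let E be a parallel network with capacities c, let 0 ≤ r ≤ C(E), define h := max_{∅≠E'⊆E} (r − C(E∖E'))/|E'| and f^hi_e := min{ c_e, h }. If C(E) − h ≤ r^a ≤ C(E), then for every attack f^a ∈ F^a(c,r^a) and every edge e, f^hi_e + f^a_e ≥ c_e; consequently B(f^hi, f^a) = r + r^a − C(E) for every f^a ∈ F^a(c,r^a). -/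
open Finset

noncomputable section

/-!
The routing `f^hi e = min (c e) h` fills every edge up to the water level `h`. Since
`∑ e, min (c e) t` is the least value of `C(E \ s) + |s| t` over all `s ⊆ E`, the
definition of `h` as a maximum makes `f^hi` route exactly `r`: a maximising `s` gives `≤ r`,
and every nonempty `s` (and `s = ∅`, as `r ≤ C(E)`) gives `≥ r`. An edge with `c e > h`
receives at least `r^a - C(E \ {e}) ≥ c e - h` units of attack, so every edge is saturated,
and then the blocked traffic is `∑ (f^hi + f^a - c) = r + r^a - C(E)`.
-/

section WaterFilling

variable {E : Type*} [Fintype E] [DecidableEq E] (c : E → ℝ)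

lemma sum_min_le_sum_sdiff_add_card_mul (s : Finset E) (t : ℝ) :
    ∑ e, min (c e) t ≤ ∑ e ∈ univ \ s, c e + s.card * t := by
  rw [← sum_sdiff (subset_univ s), ← nsmul_eq_mul, ← sum_const]
  gcongr with e _ e _
  · exact min_le_left _ _
  · exact min_le_right _ _

lemma exists_sum_min_eq_sum_sdiff_add_card_mul (t : ℝ) :
    ∃ s : Finset E, ∑ e, min (c e) t = ∑ e ∈ univ \ s, c e + s.card * t := by
  refine ⟨univ.filter (t < c ·), ?_⟩
  rw [← sum_sdiff (subset_univ _), ← nsmul_eq_mul, ← sum_const]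
  congr 1
  · refine sum_congr rfl fun e he => min_eq_left ?_
    simpa using he
  · exact sum_congr rfl fun e he => min_eq_right (mem_filter.mp he).2.le

variable [Nonempty E]

lemma le_sum_sdiff_add_card_mul_hval (r : ℝ) {s : Finset E} (hs : s.Nonempty) :
    r ≤ ∑ e ∈ univ \ s, c e + s.card * hval c r := by
  have hle : (r - ∑ e ∈ univ \ s, c e) / s.card ≤ hval c r :=
    le_sup' (fun s : Finset E => (r - ∑ e ∈ univ \ s, c e) / s.card) (by simpa using hs)
  rw [div_le_iff₀ (by exact_mod_cast hs.card_pos)] at hle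
  linarith

lemma exists_sum_sdiff_add_card_mul_hval_eq (r : ℝ) :
    ∃ s : Finset E, ∑ e ∈ univ \ s, c e + s.card * hval c r = r := by
  obtain ⟨s, hs, hmax⟩ := exists_mem_eq_sup'
    (⟨univ, by simp [univ_nonempty]⟩ :
      (univ.powerset.filter fun s : Finset E => s.Nonempty).Nonempty)
    (fun s : Finset E => (r - ∑ e ∈ univ \ s, c e) / s.card)
  have hcard : (s.card : ℝ) ≠ 0 := by exact_mod_cast ((mem_filter.mp hs).2.card_pos).ne'
  refine ⟨s, ?_⟩
  rw [hval, hmax, mul_div_cancel₀ _ hcard]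
  ring

theorem sum_min_hval {r : ℝ} (hrC : r ≤ ∑ e, c e) : ∑ e, min (c e) (hval c r) = r := by
  obtain ⟨s, hs⟩ := exists_sum_sdiff_add_card_mul_hval_eq c r
  obtain ⟨s₀, hs₀⟩ := exists_sum_min_eq_sum_sdiff_add_card_mul c (hval c r)
  refine le_antisymm ((sum_min_le_sum_sdiff_add_card_mul c s _).trans_eq hs) (hs₀ ▸ ?_)
  rcases s₀.eq_empty_or_nonempty with rfl | hne
  · simpa using hrC
  · exact le_sum_sdiff_add_card_mul_hval c r hne

end WaterFilling

section Saturation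

variable {E : Type*} [Fintype E] (c : E → ℝ)

lemma le_min_add_of_mem_feas {t ra : ℝ} (hra : ∑ e, c e - t ≤ ra) {fa : E → ℝ}
    (hfa : fa ∈ Feas c ra) (e : E) : c e ≤ min (c e) t + fa e := by
  obtain ⟨hsum, hbounds⟩ := hfa
  rcases le_total (c e) t with hle | hlt
  · rw [min_eq_left hle]
    linarith [(hbounds e).1]
  · have hdeficit : c e - fa e ≤ ∑ x, (c x - fa x) :=
      single_le_sum (fun x _ => sub_nonneg.mpr (hbounds x).2) (mem_univ e)
    rw [sum_sub_distrib, hsum] at hdeficit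
    rw [min_eq_right hlt]
    linarith

lemma blocked_eq_of_le_add {f fa : E → ℝ} (hsat : ∀ e, c e ≤ f e + fa e) :
    Blocked c f fa = ∑ e, f e + ∑ e, fa e - ∑ e, c e := by
  rw [Blocked, ← sum_add_distrib, ← sum_sub_distrib]
  exact sum_congr rfl fun e _ => max_eq_left (sub_nonneg.mpr (hsat e))

end Saturation

theorem stmt14_general {E : Type*} [Fintype E] [Nonempty E] [DecidableEq E]
    (c : E → ℝ) (r ra : ℝ) (hrC : r ≤ ∑ e, c e)
    (hra1 : (∑ e, c e) - hval c r ≤ ra) :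
    ∀ fa ∈ Feas c ra,
      (∀ e, c e ≤ min (c e) (hval c r) + fa e) ∧
        Blocked c (fun e => min (c e) (hval c r)) fa = r + ra - ∑ e, c e := by
  intro fa hfa
  have hsat := le_min_add_of_mem_feas c hra1 hfa
  exact ⟨hsat, by rw [blocked_eq_of_le_add c hsat, sum_min_hval c hrC, hfa.1]⟩

/-- If `C(E) - h ≤ ra ≤ C(E)`, then under the routing `f^hi` every edge is
saturated against every attack, so exactly `r + ra - C(E)` traffic is blocked. -/
theorem stmt14 {E : Type*} [Fintype E] [Nonempty E] [DecidableEq E]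
    (c : E → ℝ) (hc : ∀ e, 0 ≤ c e) (r ra : ℝ) (hr0 : 0 ≤ r) (hrC : r ≤ ∑ e, c e)
    (hra1 : (∑ e, c e) - hval c r ≤ ra) (hra2 : ra ≤ ∑ e, c e) :
    ∀ fa ∈ Feas c ra,
      (∀ e, c e ≤ min (c e) (hval c r) + fa e) ∧
        Blocked c (fun e => min (c e) (hval c r)) fa = r + ra - ∑ e, c e :=
  stmt14_general c r ra hrC hra1
end
end
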